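/- arXiv:1003.3099 — 3 statements merged into one kernel-verified Lean document; each statement's English description precedes it below -/
import Mathlib

section
/- Let α ≥ 3/2, β ≥ 1 with α ≥ (β + √(β²+3))/2, and let r satisfy ln(1/(1-r)) ≥ 2(α+1). If s ≥ α/(1-r) − 1/(2α(1-r) ln(1/(1-r))) − 2/((1-r) ln²(1/(1-r))) ≥ 0, then 1/(4(1-r)²) + s² − (αβ)/(1-r)² ≥ (1/(1-r) − 1/(2(1-r) ln(1/(1-r))) − 2(α+1)/((1-r) ln²(1/(1-r))))². -/
/-!
Write `t = 1 - r` and `u = 1 / log (1/(1-r))`, so that `0 < u ≤ 1/(2(α+1))`. Every term of the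
inequality is a quantity of order one divided by `t`, so it suffices to compare the numerators.
The hypothesis on `α` squares to `αβ ≤ α² - 3/4`, which reduces the claim to
`(1 - u/2 - 2(α+1)u²)² ≤ (α - u/(2α) - 2u²)² + 1 - α²`. The difference of the two sides is
`u² (4 + (1/(2α) + 2u)² - (1/2 + 2(α+1)u)²)`, and the last square is at most `9/4` because
`2(α+1)u ≤ 1`.
-/

open Real

lemma abs_lt_sqrt_sq_add_three (β : ℝ) : |β| < √(β ^ 2 + 3) := by
  rw [← sqrt_sq_eq_abs]
  exact sqrt_lt_sqrt (sq_nonneg β) (by linarith)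

lemma pos_of_add_sqrt_le {α β : ℝ} (h : (β + √(β ^ 2 + 3)) / 2 ≤ α) : 0 < α := by
  linarith [neg_abs_le β, abs_lt_sqrt_sq_add_three β]

lemma mul_le_sq_sub_of_add_sqrt_le {α β : ℝ} (h : (β + √(β ^ 2 + 3)) / 2 ≤ α) :
    α * β ≤ α ^ 2 - 3 / 4 := by
  have hsqrt : √(β ^ 2 + 3) ≤ 2 * α - β := by linarith
  have hsq : β ^ 2 + 3 ≤ (2 * α - β) ^ 2 := by
    rwa [sqrt_le_left (by linarith [sqrt_nonneg (β ^ 2 + 3)])] at hsqrt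
  nlinarith

lemma sq_le_sq_add_one_sub_sq {α u : ℝ} (hα : 0 < α) (hu : 0 ≤ u) (hαu : 2 * (α + 1) * u ≤ 1) :
    (1 - u / 2 - 2 * (α + 1) * u ^ 2) ^ 2 ≤ (α - u / (2 * α) - 2 * u ^ 2) ^ 2 + 1 - α ^ 2 := by
  have hdiff : (α - u / (2 * α) - 2 * u ^ 2) ^ 2 + 1 - α ^ 2 - (1 - u / 2 - 2 * (α + 1) * u ^ 2) ^ 2
      = u ^ 2 * (4 + (1 / (2 * α) + 2 * u) ^ 2 - (1 / 2 + 2 * (α + 1) * u) ^ 2) := by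
    field_simp
    ring
  have hbound : (1 / 2 + 2 * (α + 1) * u) ^ 2 ≤ 4 := by
    have : 0 ≤ 2 * (α + 1) * u := by positivity
    nlinarith
  have : 0 ≤ u ^ 2 * (4 + (1 / (2 * α) + 2 * u) ^ 2 - (1 / 2 + 2 * (α + 1) * u) ^ 2) :=
    mul_nonneg (sq_nonneg u) (by nlinarith [sq_nonneg (1 / (2 * α) + 2 * u)])
  linarith

lemma sq_div_le_of_le_div {t A B s α β : ℝ} (ht : 0 < t) (hA : 0 ≤ A / t) (hs : A / t ≤ s)
    (hαβ : α * β ≤ α ^ 2 - 3 / 4) (hAB : B ^ 2 ≤ A ^ 2 + 1 - α ^ 2) :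
    (B / t) ^ 2 ≤ 1 / (4 * t ^ 2) + s ^ 2 - α * β / t ^ 2 := by
  have hsq : (A / t) ^ 2 ≤ s ^ 2 := pow_le_pow_left₀ hA hs 2
  have hnum : B ^ 2 ≤ 1 / 4 + A ^ 2 - α * β := by linarith
  calc (B / t) ^ 2 = B ^ 2 / t ^ 2 := div_pow B t 2
    _ ≤ (1 / 4 + A ^ 2 - α * β) / t ^ 2 := by gcongr
    _ = 1 / (4 * t ^ 2) + (A / t) ^ 2 - α * β / t ^ 2 := by ring
    _ ≤ 1 / (4 * t ^ 2) + s ^ 2 - α * β / t ^ 2 := by linarith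

lemma sq_le_of_two_mul_add_one_le {α β t L s : ℝ} (hαβ : (β + √(β ^ 2 + 3)) / 2 ≤ α)
    (ht : 0 < t) (hL : 2 * (α + 1) ≤ L)
    (hs : α / t - 1 / (2 * α * t * L) - 2 / (t * L ^ 2) ≤ s)
    (hpos : 0 ≤ α / t - 1 / (2 * α * t * L) - 2 / (t * L ^ 2)) :
    (1 / t - 1 / (2 * t * L) - 2 * (α + 1) / (t * L ^ 2)) ^ 2
      ≤ 1 / (4 * t ^ 2) + s ^ 2 - α * β / t ^ 2 := by
  have hα : 0 < α := pos_of_add_sqrt_le hαβ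
  have hL₀ : 0 < L := by linarith
  have hαu : 2 * (α + 1) * L⁻¹ ≤ 1 := by
    rwa [← div_eq_mul_inv, div_le_one hL₀]
  have hA : α / t - 1 / (2 * α * t * L) - 2 / (t * L ^ 2)
      = (α - L⁻¹ / (2 * α) - 2 * L⁻¹ ^ 2) / t := by ring
  have hB : 1 / t - 1 / (2 * t * L) - 2 * (α + 1) / (t * L ^ 2)
      = (1 - L⁻¹ / 2 - 2 * (α + 1) * L⁻¹ ^ 2) / t := by ring
  rw [hA] at hs hpos
  rw [hB]
  exact sq_div_le_of_le_div ht hpos hs (mul_le_sq_sub_of_add_sqrt_le hαβ)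
    (sq_le_sq_add_one_sub_sq hα (inv_nonneg.mpr hL₀.le) hαu)

theorem stmt5_general (α β r s : ℝ)
    (hαβ : (β + Real.sqrt (β^2 + 3)) / 2 ≤ α)
    (hr1 : r < 1)
    (hlog : 2*(α+1) ≤ Real.log (1/(1-r)))
    (hs : s ≥ α/(1-r) - 1/(2*α*(1-r)*Real.log (1/(1-r)))
        - 2/((1-r) * (Real.log (1/(1-r)))^2))
    (hpos : 0 ≤ α/(1-r) - 1/(2*α*(1-r)*Real.log (1/(1-r)))
        - 2/((1-r) * (Real.log (1/(1-r)))^2)) :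
    1/(4*(1-r)^2) + s^2 - (α*β)/(1-r)^2
      ≥ (1/(1-r) - 1/(2*(1-r)*Real.log (1/(1-r)))
          - 2*(α+1)/((1-r) * (Real.log (1/(1-r)))^2))^2 :=
  sq_le_of_two_mul_add_one_le hαβ (sub_pos.mpr hr1) hlog hs hpos

theorem stmt5 (α β r s : ℝ) (hα : 3/2 ≤ α) (hβ : 1 ≤ β)
    (hαβ : (β + Real.sqrt (β^2 + 3)) / 2 ≤ α)
    (hr0 : 0 < r) (hr1 : r < 1)
    (hlog : 2*(α+1) ≤ Real.log (1/(1-r)))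
    (hs : s ≥ α/(1-r) - 1/(2*α*(1-r)*Real.log (1/(1-r)))
        - 2/((1-r) * (Real.log (1/(1-r)))^2))
    (hpos : 0 ≤ α/(1-r) - 1/(2*α*(1-r)*Real.log (1/(1-r)))
        - 2/((1-r) * (Real.log (1/(1-r)))^2)) :
    1/(4*(1-r)^2) + s^2 - (α*β)/(1-r)^2
      ≥ (1/(1-r) - 1/(2*(1-r)*Real.log (1/(1-r)))
          - 2*(α+1)/((1-r) * (Real.log (1/(1-r)))^2))^2 :=
  stmt5_general α β r s hαβ hr1 hlog hs hpos
end

section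
/- Let G : (0, 1/2) → ℝ be differentiable with 1/(2t) ≤ G'(t) ≤ 1/t on (0, d₀) for some 0 < d₀ < 1/2, and let 0 < ρ₀ ≤ d₀/2. Then (1/ρ₀²)∫₀^{ρ₀} t e^{−2G(t)} dt ≤ Σ_{n=1}^∞ 4^{−n} e^{−2G(2^{−n}ρ₀)} ≤ (2/ρ₀²)∫₀^{ρ₀/2} t e^{−2G(t)} dt. -/
/-!
Since `G' ≥ 1/(2t)`, the derivative `e^{-2G}(1 - 2tG')` of `t ↦ t e^{-2G(t)}` is nonpositive, so
this function is nonincreasing. Splitting `(0, ρ]` into the dyadic intervals `(tₙ₊₁, tₙ]` with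
`tₙ = 2^{-n}ρ`, each of length `tₙ₊₁`, the integral over `(tₙ₊₁, tₙ]` is at most the value at the
left endpoint times the length, and the integral over `(tₙ₊₂, tₙ₊₁]` is at least the value at the
right endpoint times the length. Summing gives the two Riemann-sum comparisons.
-/

open Real Set MeasureTheory
open scoped ENNReal

section GeometricPartition

variable {r ρ : ℝ}

lemma iUnion_Ioc_pow_mul (hr₀ : 0 < r) (hr₁ : r < 1) (hρ : 0 < ρ) :
    ⋃ n : ℕ, Ioc (r ^ (n + 1) * ρ) (r ^ n * ρ) = Ioc 0 ρ := by
  ext x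
  simp only [mem_iUnion, mem_Ioc]
  constructor
  · rintro ⟨n, hlo, hhi⟩
    exact ⟨(by positivity : 0 < r ^ (n + 1) * ρ).trans hlo,
      hhi.trans (mul_le_of_le_one_left hρ.le (pow_le_one₀ hr₀.le hr₁.le))⟩
  · rintro ⟨hx₀, hxρ⟩
    obtain ⟨n, hlo, hhi⟩ := exists_nat_pow_near_of_lt_one (div_pos hx₀ hρ)
      ((div_le_one hρ).2 hxρ) hr₀ hr₁
    exact ⟨n, (lt_div_iff₀ hρ).1 hlo, (div_le_iff₀ hρ).1 hhi⟩

lemma Icc_pow_mul_subset_Ioc (hr₀ : 0 < r) (hr₁ : r ≤ 1) (hρ : 0 < ρ) (n : ℕ) :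
    Icc (r ^ (n + 1) * ρ) (r ^ n * ρ) ⊆ Ioc 0 ρ := fun _ hx =>
  ⟨(by positivity : 0 < r ^ (n + 1) * ρ).trans_le hx.1,
    hx.2.trans (mul_le_of_le_one_left hρ.le (pow_le_one₀ hr₀.le hr₁))⟩

lemma setLIntegral_Ioc_zero_eq_tsum (f : ℝ → ℝ≥0∞) (hr₀ : 0 < r) (hr₁ : r < 1) (hρ : 0 < ρ) :
    ∫⁻ x in Ioc 0 ρ, f x = ∑' n : ℕ, ∫⁻ x in Ioc (r ^ (n + 1) * ρ) (r ^ n * ρ), f x := by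
  rw [← iUnion_Ioc_pow_mul hr₀ hr₁ hρ]
  simpa only [Order.succ_eq_add_one] using lintegral_iUnion (fun _ => measurableSet_Ioc)
    ((pow_right_anti₀ hr₀.le hr₁.le).mul_const hρ.le).pairwise_disjoint_on_Ioc_succ f

end GeometricPartition

section Antitone

variable {f : ℝ → ℝ≥0∞}

lemma setLIntegral_Ioc_le_of_antitoneOn {a b : ℝ} (hf : AntitoneOn f (Icc a b)) :
    ∫⁻ x in Ioc a b, f x ≤ f a * ENNReal.ofReal (b - a) :=
  calc ∫⁻ x in Ioc a b, f x ≤ ∫⁻ _ in Ioc a b, f a :=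
        setLIntegral_mono' measurableSet_Ioc fun _ hx =>
          hf ⟨le_rfl, hx.1.le.trans hx.2⟩ (Ioc_subset_Icc_self hx) hx.1.le
    _ = f a * ENNReal.ofReal (b - a) := by rw [setLIntegral_const, Real.volume_Ioc]

lemma le_setLIntegral_Ioc_of_antitoneOn {a b : ℝ} (hab : a ≤ b) (hf : AntitoneOn f (Icc a b)) :
    f b * ENNReal.ofReal (b - a) ≤ ∫⁻ x in Ioc a b, f x :=
  calc f b * ENNReal.ofReal (b - a) = ∫⁻ _ in Ioc a b, f b := by
        rw [setLIntegral_const, Real.volume_Ioc]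
    _ ≤ ∫⁻ x in Ioc a b, f x :=
        setLIntegral_mono' measurableSet_Ioc fun _ hx =>
          hf (Ioc_subset_Icc_self hx) ⟨hab, le_rfl⟩ hx.2

variable {r ρ : ℝ} (hr₀ : 0 < r) (hr₁ : r < 1) (hρ : 0 < ρ)
include hr₀ hr₁ hρ

lemma setLIntegral_Ioc_le_tsum_of_antitoneOn (hf : AntitoneOn f (Ioc 0 ρ)) :
    ∫⁻ x in Ioc 0 ρ, f x
      ≤ ∑' n : ℕ, f (r ^ (n + 1) * ρ) * ENNReal.ofReal (r ^ n * ρ - r ^ (n + 1) * ρ) := by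
  rw [setLIntegral_Ioc_zero_eq_tsum f hr₀ hr₁ hρ]
  exact ENNReal.tsum_le_tsum fun n =>
    setLIntegral_Ioc_le_of_antitoneOn (hf.mono (Icc_pow_mul_subset_Ioc hr₀ hr₁.le hρ n))

lemma tsum_le_setLIntegral_Ioc_of_antitoneOn (hf : AntitoneOn f (Ioc 0 ρ)) :
    ∑' n : ℕ, f (r ^ n * ρ) * ENNReal.ofReal (r ^ n * ρ - r ^ (n + 1) * ρ)
      ≤ ∫⁻ x in Ioc 0 ρ, f x := by
  rw [setLIntegral_Ioc_zero_eq_tsum f hr₀ hr₁ hρ]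
  refine ENNReal.tsum_le_tsum fun n => le_setLIntegral_Ioc_of_antitoneOn ?_
    (hf.mono (Icc_pow_mul_subset_Ioc hr₀ hr₁.le hρ n))
  exact mul_le_mul_of_nonneg_right (pow_le_pow_of_le_one hr₀.le hr₁.le n.le_succ) hρ.le

end Antitone

lemma antitoneOn_mul_exp_neg_two_mul {G g : ℝ → ℝ} {a : ℝ}
    (hG : ∀ t ∈ Ioo 0 a, HasDerivAt G (g t) t) (hg : ∀ t ∈ Ioo 0 a, 1 / (2 * t) ≤ g t) :
    AntitoneOn (fun t => t * exp (-2 * G t)) (Ioo 0 a) := by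
  have hderiv : ∀ t ∈ Ioo 0 a, HasDerivAt (fun t => t * exp (-2 * G t))
      (exp (-2 * G t) * (1 - 2 * t * g t)) t := fun t ht =>
    ((hasDerivAt_id' t).mul ((hG t ht).const_mul (-2)).exp).congr_deriv (by ring)
  refine antitoneOn_of_hasDerivWithinAt_nonpos (f' := fun t => exp (-2 * G t) * (1 - 2 * t * g t))
    (convex_Ioo 0 a) (fun t ht => (hderiv t ht).continuousAt.continuousWithinAt) ?_ ?_
    <;> intro t ht <;> rw [interior_Ioo] at ht
  · exact (hderiv t ht).hasDerivWithinAt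
  · have hgt := (div_le_iff₀ (by linarith [ht.1])).1 (hg t ht)
    exact mul_nonpos_of_nonneg_of_nonpos (exp_pos _).le (by linarith)

theorem stmt8_general (G g : ℝ → ℝ) (d₀ ρ₀ : ℝ) (hd₀' : d₀ < 1/2)
    (hG : ∀ t ∈ Set.Ioo (0:ℝ) (1/2), HasDerivAt G (g t) t)
    (hg : ∀ t ∈ Set.Ioo (0:ℝ) d₀, 1/(2*t) ≤ g t ∧ g t ≤ 1/t)
    (hρ₀ : 0 < ρ₀) (hρ₀' : ρ₀ ≤ d₀/2) :
    ENNReal.ofReal (1/ρ₀^2)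
        * (∫⁻ t in Set.Ioo (0:ℝ) ρ₀, ENNReal.ofReal (t * Real.exp (-2 * G t)))
      ≤ (∑' n : ℕ, ENNReal.ofReal
          ((4:ℝ)⁻¹^(n+1) * Real.exp (-2 * G ((2:ℝ)⁻¹^(n+1) * ρ₀))))
    ∧ (∑' n : ℕ, ENNReal.ofReal
          ((4:ℝ)⁻¹^(n+1) * Real.exp (-2 * G ((2:ℝ)⁻¹^(n+1) * ρ₀))))
      ≤ ENNReal.ofReal (2/ρ₀^2)
        * (∫⁻ t in Set.Ioo (0:ℝ) (ρ₀/2), ENNReal.ofReal (t * Real.exp (-2 * G t))) := by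
  have hf : AntitoneOn (fun t => ENNReal.ofReal (t * exp (-2 * G t))) (Ioc 0 ρ₀) :=
    (ENNReal.ofReal_mono.comp_antitoneOn (antitoneOn_mul_exp_neg_two_mul
      (fun t ht => hG t ⟨ht.1, ht.2.trans hd₀'⟩) fun t ht => (hg t ht).1)).mono
      (Ioc_subset_Ioo_right (by linarith))
  have hf' : AntitoneOn (fun t => ENNReal.ofReal (t * exp (-2 * G t))) (Ioc 0 (ρ₀ / 2)) :=
    hf.mono (Ioc_subset_Ioc_right (by linarith))
  have four_inv_pow (n : ℕ) : (4:ℝ)⁻¹ ^ n = (2:ℝ)⁻¹ ^ n * (2:ℝ)⁻¹ ^ n := by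
    rw [← mul_pow]; norm_num
  rw [setLIntegral_congr Ioo_ae_eq_Ioc, setLIntegral_congr Ioo_ae_eq_Ioc]
  constructor
  · have hsum := setLIntegral_Ioc_le_tsum_of_antitoneOn (r := 2⁻¹) (by norm_num) (by norm_num)
      hρ₀ hf
    refine (mul_le_mul_right hsum _).trans_eq ?_
    rw [← ENNReal.tsum_mul_left]
    congr 1 with n
    rw [← ENNReal.ofReal_mul (by positivity), ← ENNReal.ofReal_mul (by positivity)]
    congr 1
    rw [four_inv_pow]
    field_simp
    ring
  · have hsum := tsum_le_setLIntegral_Ioc_of_antitoneOn (r := 2⁻¹) (by norm_num) (by norm_num)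
      (by positivity) hf'
    refine le_trans (le_of_eq ?_) (mul_le_mul_right hsum _)
    rw [← ENNReal.tsum_mul_left]
    congr 1 with n
    rw [← ENNReal.ofReal_mul (by positivity), ← ENNReal.ofReal_mul (by positivity),
      show (2:ℝ)⁻¹ ^ n * (ρ₀ / 2) = (2:ℝ)⁻¹ ^ (n + 1) * ρ₀ by ring]
    congr 1
    rw [four_inv_pow]
    field_simp
    ring

theorem stmt8 (G g : ℝ → ℝ) (d₀ ρ₀ : ℝ) (hd₀ : 0 < d₀) (hd₀' : d₀ < 1/2)
    (hG : ∀ t ∈ Set.Ioo (0:ℝ) (1/2), HasDerivAt G (g t) t)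
    (hg : ∀ t ∈ Set.Ioo (0:ℝ) d₀, 1/(2*t) ≤ g t ∧ g t ≤ 1/t)
    (hρ₀ : 0 < ρ₀) (hρ₀' : ρ₀ ≤ d₀/2) :
    ENNReal.ofReal (1/ρ₀^2)
        * (∫⁻ t in Set.Ioo (0:ℝ) ρ₀, ENNReal.ofReal (t * Real.exp (-2 * G t)))
      ≤ (∑' n : ℕ, ENNReal.ofReal
          ((4:ℝ)⁻¹^(n+1) * Real.exp (-2 * G ((2:ℝ)⁻¹^(n+1) * ρ₀))))
    ∧ (∑' n : ℕ, ENNReal.ofReal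
          ((4:ℝ)⁻¹^(n+1) * Real.exp (-2 * G ((2:ℝ)⁻¹^(n+1) * ρ₀))))
      ≤ ENNReal.ofReal (2/ρ₀^2)
        * (∫⁻ t in Set.Ioo (0:ℝ) (ρ₀/2), ENNReal.ofReal (t * Real.exp (-2 * G t))) :=
  stmt8_general G g d₀ ρ₀ hd₀' hG hg hρ₀ hρ₀'
end

section
/- Define a(r) = (√3/2)/(1−r) − (1/2)(d + 1/√3)/((1−r) ln(1/(1−r))) − e(1/√3 − d/2) for 1−r ≤ 1/e (and a(r)=0 otherwise), where d > 1/√3. Then the associated radial potential satisfies, for r sufficiently close to 1: r² a(r)² + 3/(4r²) ≥ (3/4)/(1−r)² − ((d√3+1)/2)/((1−r)² ln(1/(1−r))). -/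
/-! Put s = 1 - r and L = log (1/s), so that L ≥ 1 once s ≤ 1/e. Then a(r) = t/(2s) - c/(2sL) - E
with t = √3, c = d + 1/√3 > 0 and a constant E, and t c = d√3 + 1. The square of the main part
t/(2s) - c/(2sL) is exactly the right-hand side plus the positive term c²/(4s²L²). The constant E
and the factor r² = (1 - s)² only cost O(1/s), and this is dominated by c²/(4s²L²) because
s L² → 0 as s → 0⁺. -/

open Real Filter Topology

theorem tendsto_mul_log_sq_nhdsGT_zero :
    Tendsto (fun s : ℝ => s * log s ^ 2) (𝓝[>] 0) (𝓝 0) := by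
  have h := (tendsto_log_mul_rpow_nhdsGT_zero (r := 1 / 2) one_half_pos).pow 2
  rw [zero_pow two_ne_zero] at h
  refine h.congr' (eventually_mem_nhdsWithin.mono fun s (hs : 0 < s) => ?_)
  rw [← sqrt_eq_rpow, mul_pow, sq_sqrt hs.le, mul_comm]

theorem potential_sq_lower_bound {t c E s L : ℝ} (ht : 0 ≤ t) (hc : 0 ≤ c) (hs : 0 < s)
    (hs1 : s ≤ 1) (hL : 1 ≤ L) (hsmall : 4 * (t + c + 2 * |E|) ^ 2 * (s * L ^ 2) ≤ c ^ 2) :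
    t ^ 2 / 4 / s ^ 2 - t * c / 2 / (s ^ 2 * L)
      ≤ (1 - s) ^ 2 * (t / 2 * (1 / s) - c / 2 * (1 / (s * L)) - E) ^ 2 := by
  set v := 1 / s with hv
  set u := 1 / (s * L) with hu
  set N := t + c + 2 * |E|
  set P := t / 2 * v - c / 2 * u
  have hsv : s * v = 1 := by rw [hv]; field_simp
  have hv1 : 1 ≤ v := by rw [hv, le_div_iff₀ hs]; linarith
  have hu0 : 0 ≤ u := by positivity
  have huv : u ≤ v := by rw [hu, hv]; gcongr; nlinarith
  have hP : |P| ≤ (t + c) / 2 * v := by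
    have hcu := mul_le_mul_of_nonneg_left huv hc
    have htv : 0 ≤ t * v := by positivity
    rw [abs_le]; constructor <;> simp only [P] <;> linarith [mul_nonneg hc hu0]
  have hA : |P - E| ≤ N / 2 * v := by
    calc |P - E| ≤ |P| + |E| := abs_sub _ _
      _ ≤ (t + c) / 2 * v + |E| * v := by gcongr; exact le_mul_of_one_le_right (abs_nonneg E) hv1
      _ = N / 2 * v := by ring
  have hsA : s * (P - E) ^ 2 ≤ N ^ 2 / 4 * v := by
    calc s * (P - E) ^ 2 = s * |P - E| ^ 2 := by rw [sq_abs]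
      _ ≤ s * (N / 2 * v) ^ 2 := by gcongr
      _ = N ^ 2 / 4 * v * (s * v) := by ring
      _ = N ^ 2 / 4 * v := by rw [hsv, mul_one]
  have hcross : (P - E) ^ 2 ≥ P ^ 2 - |E| * (t + c) * v := by
    have hEP : E * P ≤ |E| * ((t + c) / 2 * v) := by
      calc E * P ≤ |E * P| := le_abs_self _
        _ = |E| * |P| := abs_mul _ _
        _ ≤ _ := by gcongr
    linarith [sq_nonneg E]
  have hEN : |E| * (t + c) * v ≤ N ^ 2 / 8 * v := by
    gcongr
    nlinarith [sq_nonneg (t + c - 2 * |E|)]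
  have hdominant : 4 * N ^ 2 * v ≤ c ^ 2 * u ^ 2 := by
    have huv2 : u ^ 2 * (s * L ^ 2) = v := by rw [hu, hv]; field_simp
    have hscaled := mul_le_mul_of_nonneg_left hsmall (sq_nonneg u)
    calc 4 * N ^ 2 * v = u ^ 2 * (4 * N ^ 2 * (s * L ^ 2)) := by rw [← huv2]; ring
      _ ≤ c ^ 2 * u ^ 2 := by linarith
  have hP2 : P ^ 2 = t ^ 2 / 4 / s ^ 2 - t * c / 2 / (s ^ 2 * L) + c ^ 2 / 4 * u ^ 2 := by
    simp only [P, hu, hv]; field_simp; ring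
  have hexpand : (1 - s) ^ 2 * (P - E) ^ 2
      = (P - E) ^ 2 - 2 * (s * (P - E) ^ 2) + s ^ 2 * (P - E) ^ 2 := by ring
  have hNv : 0 ≤ N ^ 2 * v := by positivity
  linarith [mul_nonneg (sq_nonneg s) (sq_nonneg (P - E))]

theorem stmt17 (d : ℝ) (hd : 1 / Real.sqrt 3 < d)
    (a : ℝ → ℝ)
    (ha : ∀ r : ℝ, a r = if 1 - r ≤ 1 / Real.exp 1 then
        Real.sqrt 3 / 2 * (1/(1-r))
          - (1/2) * (d + 1/Real.sqrt 3) * (1/((1-r) * Real.log (1/(1-r))))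
          - Real.exp 1 * (1/Real.sqrt 3 - d/2)
      else 0) :
    ∃ r₁ : ℝ, r₁ < 1 ∧ ∀ r : ℝ, r₁ < r → r < 1 →
      r^2 * (a r)^2 + 3/(4*r^2)
        ≥ (3/4) / (1-r)^2
          - ((d * Real.sqrt 3 + 1)/2) / ((1-r)^2 * Real.log (1/(1-r))) := by
  set t := √3
  set c := d + 1 / t
  set N := t + c + 2 * |exp 1 * (1 / t - d / 2)|
  have ht : 0 < t := by positivity
  have hc : 0 < c := by linarith [one_div_pos.2 ht]
  have hN : 0 < N := by positivity
  have hev : ∀ᶠ s in 𝓝[>] 0, s < 1 / exp 1 ∧ 4 * N ^ 2 * (s * log s ^ 2) ≤ c ^ 2 := by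
    refine (eventually_nhdsWithin_of_eventually_nhds (eventually_lt_nhds (by positivity))).and
      ((tendsto_mul_log_sq_nhdsGT_zero.eventually (eventually_le_nhds
        (by positivity : (0 : ℝ) < c ^ 2 / (4 * N ^ 2)))).mono fun s hs => ?_)
    rwa [le_div_iff₀ (by positivity), mul_comm] at hs
  obtain ⟨δ, hδ, hδs⟩ := (nhdsGT_basis 0).eventually_iff.1 hev
  refine ⟨1 - δ, by linarith, fun r hr₁ hr₂ => ?_⟩
  obtain ⟨hse, hsmall⟩ := hδs ⟨sub_pos.2 hr₂, by linarith⟩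
  have hs : 0 < 1 - r := sub_pos.2 hr₂
  have hL : 1 ≤ log (1 / (1 - r)) :=
    (le_log_iff_exp_le (by positivity)).2 ((le_one_div hs (exp_pos 1)).1 hse.le)
  have hs1 : 1 - r ≤ 1 := hse.le.trans (by rw [div_le_one (exp_pos 1)]; linarith [exp_one_gt_d9])
  have hlog : log (1 - r) ^ 2 = log (1 / (1 - r)) ^ 2 := by rw [one_div, log_inv, neg_sq]
  rw [hlog] at hsmall
  have key := potential_sq_lower_bound ht.le hc.le hs hs1 hL hsmall
  have ht3 : t ^ 2 = 3 := sq_sqrt zero_le_three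
  have htc : t * c = d * t + 1 := by simp only [c]; field_simp
  rw [ht3, htc, sub_sub_cancel] at key
  rw [ha, if_pos hse.le, one_div_mul_eq_div]
  linarith [key, (by positivity : 0 ≤ 3 / (4 * r ^ 2))]
end
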